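/- For every positive integer n, all integers m ≥ 0 and k > m, and every real number y, one has q_m(y(y + 1)) = (−1)^m (n/2)_m (k − m)_m · Σ_{l=0}^m [(−y)_l (−m)_l (1 + y)_l] / [(n/2)_l (1 − k)_l · l!]. (The right-hand side is the terminating hypergeometric series ₃F₂[−y, −m, 1+y; n/2, 1−k; 1] times the prefactor, exhibiting q_m as a dual Hahn polynomial R_m(λ(y); n/2−1, 1−n/2, k) up to a multiplicative factor, where λ(x) = x(x+1).) -/

import Mathlib

/-- Pochhammer symbol `(a)_l = a(a+1)⋯(a+l-1)`, with `(a)_0 = 1`. -/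
noncomputable def poch (a : ℝ) (l : ℕ) : ℝ := ∏ i ∈ Finset.range l, (a + i)

/-- The polynomial `q_m(y) = Σ_{l=0}^m (−1)^{m−l} (n/2+l)_{m−l} (k−m)_{m−l} C(m,l)
Π_{j=1}^l (y − j(j−1))`. -/
noncomputable def qq (n k m : ℕ) (y : ℝ) : ℝ :=
  ∑ l ∈ Finset.range (m + 1),
    (-1 : ℝ) ^ (m - l) * poch ((n : ℝ) / 2 + l) (m - l) * poch ((k : ℝ) - m) (m - l)
      * (m.choose l) * ∏ j ∈ Finset.range l, (y - ((j : ℝ) + 1) * (j : ℝ))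

/-! The identity holds term by term in `l`. Splitting `(n/2)_m = (n/2)_l (n/2+l)_{m-l}` and
`(k-m)_m = (k-m)_{m-l} (k-l)_l`, the reflection formulas `(-m)_l = (-1)^l l! C(m,l)` and
`(1-k)_l = (-1)^l (k-l)_l`, together with `(-y)_l (1+y)_l = (-1)^l ∏_{j<l} (y(y+1) - j(j+1))`,
turn the `l`-th hypergeometric term into the `l`-th summand of `q_m(y(y+1))`. -/

lemma poch_eq_eval_ascPochhammer (a : ℝ) (l : ℕ) : poch a l = (ascPochhammer ℝ l).eval a := by
  induction l with
  | zero => simp [poch]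
  | succ l ih => rw [poch, Finset.prod_range_succ, ← poch, ih, ascPochhammer_succ_eval]

lemma poch_add (a : ℝ) (p q : ℕ) : poch a (p + q) = poch a p * poch (a + p) q := by
  simp [poch, Finset.prod_range_add, add_assoc]

lemma poch_pos {a : ℝ} (ha : 0 < a) (l : ℕ) : 0 < poch a l :=
  Finset.prod_pos fun i _ => by positivity

lemma poch_neg (a : ℝ) (l : ℕ) : poch (-a) l = (-1) ^ l * poch (a - l + 1) l := by
  simp only [poch_eq_eval_ascPochhammer, ascPochhammer_eval_neg_eq_descPochhammer,
    descPochhammer_eval_eq_ascPochhammer]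

lemma poch_neg_natCast (m l : ℕ) :
    poch (-(m : ℝ)) l = (-1) ^ l * (m.choose l * l.factorial) := by
  rw [poch_eq_eval_ascPochhammer, ascPochhammer_eval_neg_eq_descPochhammer,
    descPochhammer_eval_eq_descFactorial, Nat.descFactorial_eq_factorial_mul_choose]
  push_cast
  ring

lemma poch_one_sub_natCast (k l : ℕ) :
    poch (1 - (k : ℝ)) l = (-1) ^ l * poch ((k : ℝ) - l) l := by
  rw [← neg_sub, poch_neg]
  ring_nf

lemma poch_neg_mul_poch_one_add (y : ℝ) (l : ℕ) :
    poch (-y) l * poch (1 + y) l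
      = (-1) ^ l * ∏ j ∈ Finset.range l, (y * (y + 1) - ((j : ℝ) + 1) * j) := by
  simp only [poch, ← Finset.prod_mul_distrib, Finset.pow_eq_prod_const]
  exact Finset.prod_congr rfl fun j _ => by ring

lemma poch_split {a : ℝ} {l m : ℕ} (hlm : l ≤ m) :
    poch a m = poch a l * poch (a + l) (m - l) := by
  rw [← poch_add, Nat.add_sub_cancel' hlm]

lemma qq_summand_eq_hypergeometric_term {a b P : ℝ} {l m : ℕ} (hlm : l ≤ m)
    (ha : poch a l ≠ 0) (hb : poch (b + (m - l : ℕ)) l ≠ 0) :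
    (-1) ^ (m - l) * poch (a + l) (m - l) * poch b (m - l) * m.choose l * P
      = (-1) ^ m * poch a m * poch b m
          * ((-1) ^ l * P * ((-1) ^ l * (m.choose l * l.factorial))
            / (poch a l * ((-1) ^ l * poch (b + (m - l : ℕ)) l) * l.factorial)) := by
  have hm : m = m - l + l := (Nat.sub_add_cancel hlm).symm
  rw [poch_split hlm, hm, poch_add b (m - l) l, pow_add, ← hm]
  field_simp
  rw [pow_right_comm, neg_one_sq, one_pow, mul_one]

/-- `q_m(y(y+1))` equals a multiple of the terminating hypergeometric series
`₃F₂[−y, −m, 1+y; n/2, 1−k; 1]`, i.e. a dual Hahn polynomial. -/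
theorem stmt4 (n : ℕ) (hn : 0 < n) (m k : ℕ) (hk : m < k) (y : ℝ) :
    qq n k m (y * (y + 1))
      = (-1 : ℝ) ^ m * poch ((n : ℝ) / 2) m * poch ((k : ℝ) - m) m
          * ∑ l ∈ Finset.range (m + 1),
              poch (-y) l * poch (-(m : ℝ)) l * poch (1 + y) l
                / (poch ((n : ℝ) / 2) l * poch (1 - (k : ℝ)) l * (l.factorial : ℝ)) := by
  rw [qq, Finset.mul_sum]
  refine Finset.sum_congr rfl fun l hl => ?_
  have hlm : l ≤ m := Finset.mem_range_succ_iff.mp hl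
  have hkl : (k : ℝ) - l = k - m + (m - l : ℕ) := by push_cast [Nat.cast_sub hlm]; ring
  rw [mul_right_comm (poch (-y) l), poch_neg_mul_poch_one_add, poch_neg_natCast,
    poch_one_sub_natCast, hkl]
  refine qq_summand_eq_hypergeometric_term hlm (poch_pos (by positivity) l).ne'
    (poch_pos ?_ l).ne'
  rw [← hkl, sub_pos]
  exact_mod_cast hlm.trans_lt hk
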